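/- Let (Zₙ) be a stochastic process on [0,1] where Z₀ = z ∈ [0,1] and, conditionally on Zₙ, Z_{n+1} = Zₙ² with probability 1/2 and Z_{n+1} = 2Zₙ - Zₙ² with probability 1/2. Then E[√(Zₙ(1-Zₙ))] ≤ (√3/2)ⁿ · √(z(1-z)) ≤ (1/2)·(√3/2)ⁿ, and hence for every α ∈ (3/4, 1), Pr[Zₙ(1-Zₙ) ≥ αⁿ] ≤ (1/2)·(3/(4α))^{n/2}. -/
import Mathlib

noncomputable def becProc (z : ℝ) {n : ℕ} (s : Fin n → Bool) : ℝ :=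
  (List.ofFn s).foldl (fun x b => if b then x ^ 2 else 2 * x - x ^ 2) z


lemma step01 {x : ℝ} (h0 : 0 ≤ x) (h1 : x ≤ 1) (b : Bool) :
    0 ≤ (if b then x ^ 2 else 2 * x - x ^ 2) ∧ (if b then x ^ 2 else 2 * x - x ^ 2) ≤ 1 := by
  cases b
  · rw [if_neg (by simp)]; constructor <;> nlinarith
  · rw [if_pos rfl]; constructor <;> nlinarith

lemma foldl_mem (l : List Bool) : ∀ x : ℝ, 0 ≤ x → x ≤ 1 →
    0 ≤ l.foldl (fun x b => if b then x ^ 2 else 2 * x - x ^ 2) x ∧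
    l.foldl (fun x b => if b then x ^ 2 else 2 * x - x ^ 2) x ≤ 1 := by
  induction l with
  | nil => intro x h0 h1; exact ⟨h0, h1⟩
  | cons b t ih =>
    intro x h0 h1
    simp only [List.foldl_cons]
    apply ih
    · exact (step01 h0 h1 b).1
    · exact (step01 h0 h1 b).2

lemma becProc_mem (z : ℝ) (h0 : 0 ≤ z) (h1 : z ≤ 1) {n : ℕ} (s : Fin n → Bool) :
    0 ≤ becProc z s ∧ becProc z s ≤ 1 := foldl_mem _ z h0 h1

lemma becProc_cons (z : ℝ) {n : ℕ} (b : Bool) (t : Fin n → Bool) :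
    becProc z (Fin.cons b t) = becProc (if b then z ^ 2 else 2 * z - z ^ 2) t := by
  simp [becProc, List.ofFn_succ]

lemma sqrt_amgm {a b : ℝ} (ha : 0 ≤ a) (hb : 0 ≤ b) :
    2 * Real.sqrt (a * b) ≤ a + b := by
  nlinarith [Real.sq_sqrt (mul_nonneg ha hb), Real.sqrt_nonneg (a * b),
    sq_nonneg (Real.sqrt a - Real.sqrt b), Real.sq_sqrt ha, Real.sq_sqrt hb,
    Real.sqrt_mul ha b]

lemma key (x : ℝ) (h0 : 0 ≤ x) (h1 : x ≤ 1) :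
    Real.sqrt (x ^ 2 * (1 - x ^ 2)) + Real.sqrt ((2 * x - x ^ 2) * (1 - (2 * x - x ^ 2)))
      ≤ Real.sqrt 3 * Real.sqrt (x * (1 - x)) := by
  have hx1 : (0:ℝ) ≤ x * (1 - x) := by nlinarith
  have ha : (0:ℝ) ≤ x * (1 + x) := by nlinarith
  have hb : (0:ℝ) ≤ (1 - x) * (2 - x) := by nlinarith
  have e1 : x ^ 2 * (1 - x ^ 2) = (x * (1 - x)) * (x * (1 + x)) := by ring
  have e2 : (2 * x - x ^ 2) * (1 - (2 * x - x ^ 2)) = (x * (1 - x)) * ((1 - x) * (2 - x)) := by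
    ring
  rw [e1, e2, Real.sqrt_mul hx1, Real.sqrt_mul hx1, ← mul_add, mul_comm]
  apply mul_le_mul_of_nonneg_right _ (Real.sqrt_nonneg _)
  have hA : 0 ≤ Real.sqrt (x * (1 + x)) + Real.sqrt ((1 - x) * (2 - x)) :=
    add_nonneg (Real.sqrt_nonneg _) (Real.sqrt_nonneg _)
  rw [Real.le_sqrt hA (by norm_num)]
  have hab : x * (1 + x) * ((1 - x) * (2 - x)) = (1 - x ^ 2) * (x * (2 - x)) := by ring
  have h2 : 2 * Real.sqrt (x * (1 + x) * ((1 - x) * (2 - x))) ≤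
      (1 - x ^ 2) + x * (2 - x) := by
    rw [hab]; exact sqrt_amgm (by nlinarith) (by nlinarith)
  have hmul : Real.sqrt (x * (1 + x)) * Real.sqrt ((1 - x) * (2 - x)) =
      Real.sqrt (x * (1 + x) * ((1 - x) * (2 - x))) := (Real.sqrt_mul ha _).symm
  nlinarith [Real.sq_sqrt ha, Real.sq_sqrt hb]

lemma sum_le (n : ℕ) : ∀ z : ℝ, 0 ≤ z → z ≤ 1 →
    (∑ s : Fin n → Bool, Real.sqrt (becProc z s * (1 - becProc z s))) ≤
      Real.sqrt 3 ^ n * Real.sqrt (z * (1 - z)) := by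
  induction n with
  | zero => intro z h0 h1; simp [becProc]
  | succ n ih =>
    intro z h0 h1
    have hsplit : (∑ s : Fin (n+1) → Bool, Real.sqrt (becProc z s * (1 - becProc z s))) =
        ∑ p : Bool × (Fin n → Bool),
          Real.sqrt (becProc z (Fin.cons p.1 p.2) * (1 - becProc z (Fin.cons p.1 p.2))) := by
      apply Fintype.sum_equiv (Fin.consEquiv (fun _ => Bool)).symm
      intro s
      simp [Fin.consEquiv, Fin.cons_self_tail]
    rw [hsplit, Fintype.sum_prod_type]
    have h2 : ∀ b : Bool,
        (∑ t : Fin n → Bool,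
          Real.sqrt (becProc z (Fin.cons b t) * (1 - becProc z (Fin.cons b t)))) ≤
        Real.sqrt 3 ^ n *
          Real.sqrt ((if b then z ^ 2 else 2 * z - z ^ 2) *
            (1 - (if b then z ^ 2 else 2 * z - z ^ 2))) := by
      intro b
      simp only [becProc_cons]
      apply ih
      · exact (step01 h0 h1 b).1
      · exact (step01 h0 h1 b).2
    calc ∑ b : Bool, ∑ t : Fin n → Bool,
          Real.sqrt (becProc z (Fin.cons b t) * (1 - becProc z (Fin.cons b t)))
        ≤ ∑ b : Bool, Real.sqrt 3 ^ n *
            Real.sqrt ((if b then z ^ 2 else 2 * z - z ^ 2) *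
              (1 - (if b then z ^ 2 else 2 * z - z ^ 2))) :=
          Finset.sum_le_sum fun b _ => h2 b
      _ = Real.sqrt 3 ^ n * (Real.sqrt (z ^ 2 * (1 - z ^ 2)) +
            Real.sqrt ((2 * z - z ^ 2) * (1 - (2 * z - z ^ 2)))) := by
          simp [Fintype.sum_bool]; ring
      _ ≤ Real.sqrt 3 ^ n * (Real.sqrt 3 * Real.sqrt (z * (1 - z))) := by
          apply mul_le_mul_of_nonneg_left (key z h0 h1)
            (pow_nonneg (Real.sqrt_nonneg 3) n)
      _ = Real.sqrt 3 ^ (n + 1) * Real.sqrt (z * (1 - z)) := by ring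

lemma sqrt_pow_nat (x : ℝ) (hx : 0 ≤ x) (n : ℕ) : Real.sqrt (x ^ n) = Real.sqrt x ^ n := by
  induction n with
  | zero => simp
  | succ n ih => rw [pow_succ, Real.sqrt_mul (pow_nonneg hx n), ih, pow_succ]

theorem stmt_16 (z : ℝ) (h0 : 0 ≤ z) (h1 : z ≤ 1) (n : ℕ) :
    (∑ s : Fin n → Bool, Real.sqrt (becProc z s * (1 - becProc z s))) / 2 ^ n ≤
        (Real.sqrt 3 / 2) ^ n * Real.sqrt (z * (1 - z)) ∧
    (Real.sqrt 3 / 2) ^ n * Real.sqrt (z * (1 - z)) ≤ (1 / 2) * (Real.sqrt 3 / 2) ^ n ∧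
    ∀ α : ℝ, 3 / 4 < α → α < 1 →
      ((Finset.univ.filter fun s : Fin n → Bool =>
          α ^ n ≤ becProc z s * (1 - becProc z s)).card : ℝ) / 2 ^ n ≤
        (1 / 2) * (3 / (4 * α)) ^ ((n : ℝ) / 2) := by
  have h2n : (0:ℝ) < 2 ^ n := by positivity
  have hS := sum_le n z h0 h1
  have hhalf : Real.sqrt (z * (1 - z)) ≤ 1 / 2 := by
    rw [show (1:ℝ)/2 = Real.sqrt ((1/2)^2) by rw [Real.sqrt_sq]; norm_num]
    apply Real.sqrt_le_sqrt; nlinarith [sq_nonneg (z - 1/2)]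
  refine ⟨?_, ?_, ?_⟩
  · rw [div_le_iff₀ h2n]
    calc (∑ s : Fin n → Bool, Real.sqrt (becProc z s * (1 - becProc z s)))
        ≤ Real.sqrt 3 ^ n * Real.sqrt (z * (1 - z)) := hS
      _ = (Real.sqrt 3 / 2) ^ n * Real.sqrt (z * (1 - z)) * 2 ^ n := by
          rw [div_pow]; field_simp
  · have h := mul_le_mul_of_nonneg_left hhalf
      (pow_nonneg (div_nonneg (Real.sqrt_nonneg 3) (by norm_num : (0:ℝ) ≤ 2)) n)
    linarith [h]
  · intro α hα1 hα2
    have hα0 : 0 < α := by linarith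
    set F := Finset.univ.filter fun s : Fin n → Bool =>
        α ^ n ≤ becProc z s * (1 - becProc z s) with hF
    have hcard : (F.card : ℝ) * Real.sqrt α ^ n ≤
        ∑ s : Fin n → Bool, Real.sqrt (becProc z s * (1 - becProc z s)) := by
      calc (F.card : ℝ) * Real.sqrt α ^ n
          = ∑ _s ∈ F, Real.sqrt α ^ n := by rw [Finset.sum_const, nsmul_eq_mul]
        _ ≤ ∑ s ∈ F, Real.sqrt (becProc z s * (1 - becProc z s)) := by
            apply Finset.sum_le_sum
            intro s hs
            rw [hF, Finset.mem_filter] at hs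
            rw [← sqrt_pow_nat α hα0.le]
            exact Real.sqrt_le_sqrt hs.2
        _ ≤ ∑ s : Fin n → Bool, Real.sqrt (becProc z s * (1 - becProc z s)) :=
            Finset.sum_le_sum_of_subset_of_nonneg (Finset.filter_subset _ _)
              (fun s _ _ => Real.sqrt_nonneg _)
    have hbound : (F.card : ℝ) * Real.sqrt α ^ n ≤ Real.sqrt 3 ^ n * (1 / 2) := by
      calc (F.card : ℝ) * Real.sqrt α ^ n ≤ _ := hcard
        _ ≤ Real.sqrt 3 ^ n * Real.sqrt (z * (1 - z)) := hS
        _ ≤ Real.sqrt 3 ^ n * (1 / 2) :=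
            mul_le_mul_of_nonneg_left hhalf (pow_nonneg (Real.sqrt_nonneg 3) n)
    have hrpow : (3 / (4 * α)) ^ ((n : ℝ) / 2) = Real.sqrt (3 / (4 * α)) ^ n := by
      have h34 : (0:ℝ) ≤ 3 / (4 * α) := by positivity
      rw [← sqrt_pow_nat _ h34, Real.sqrt_eq_rpow,
        ← Real.rpow_natCast (3 / (4 * α)) n, ← Real.rpow_mul h34]
      congr 1
      ring
    rw [hrpow]
    have hsα : 0 < Real.sqrt α := Real.sqrt_pos.2 hα0
    have hsqd : Real.sqrt (3 / (4 * α)) = Real.sqrt 3 / (2 * Real.sqrt α) := by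
      rw [Real.sqrt_div (by norm_num : (0:ℝ) ≤ 3), Real.sqrt_mul (by norm_num : (0:ℝ) ≤ 4),
        show Real.sqrt 4 = 2 by rw [show (4:ℝ) = 2^2 by norm_num, Real.sqrt_sq]; norm_num]
    rw [hsqd, div_le_iff₀ h2n]
    have key2 : (F.card : ℝ) ≤ Real.sqrt 3 ^ n * (1 / 2) / Real.sqrt α ^ n := by
      rw [le_div_iff₀ (pow_pos hsα n)]; linarith
    calc (F.card : ℝ) ≤ Real.sqrt 3 ^ n * (1 / 2) / Real.sqrt α ^ n := key2
      _ = 1 / 2 * (Real.sqrt 3 / (2 * Real.sqrt α)) ^ n * 2 ^ n := by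
          rw [div_pow, mul_pow]; field_simp
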